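/- Let G be a connected non-bipartite signed graph and suppose a facet subgraph H of G consists of exactly two components H_1 (bipartite, with bipartition L_1 ∪ R_1) and H_2 (non-bipartite). Let a ∈ ℤ^n lie in ℤρ(E(G)) and satisfy Σ_{i∈L_1} a_i = Σ_{j∈R_1} a_j. Then a ∈ ℤρ(E(H)) = ℤρ(E(H_1)) ⊕ ℤρ(E(H_2)). -/

import Mathlib

open scoped BigOperators

namespace EdgeRing

/-- A signed edge on vertex set `Fin n`: endpoints `e.1`, `e.2.1` and sign `e.2.2`. -/
abbrev SEdge (n : ℕ) := Fin n × Fin n × ℤ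

/-- A signed graph on `n` vertices: a set of signed edges (loops allowed, `e.1 = e.2.1`). -/
structure SGraph (n : ℕ) where
  E : Set (SEdge n)
  sgn_unit : ∀ e ∈ E, e.2.2 = 1 ∨ e.2.2 = -1

variable {n : ℕ}

/-- `ρ(±ij) = ±(e_i + e_j)` (a loop at `i` gives `±2 e_i`), integer version. -/
def rhoZ (e : SEdge n) : Fin n → ℤ :=
  fun v => e.2.2 * ((if e.1 = v then 1 else 0) + (if e.2.1 = v then 1 else 0))

/-- real version of `rhoZ`. -/
def rhoR (e : SEdge n) : Fin n → ℝ := fun v => (rhoZ e v : ℝ)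

def toR (a : Fin n → ℤ) : Fin n → ℝ := fun v => (a v : ℝ)

def SGraph.rhoZSet (G : SGraph n) : Set (Fin n → ℤ) := {x | ∃ e ∈ G.E, x = rhoZ e}

def SGraph.rhoRSet (G : SGraph n) : Set (Fin n → ℝ) := {x | ∃ e ∈ G.E, x = rhoR e}

/-- `ℤρ(E(G))`: the subgroup of `ℤ^n` generated by the edge vectors. -/
def SGraph.lattice (G : SGraph n) : AddSubgroup (Fin n → ℤ) :=
  AddSubgroup.closure G.rhoZSet

/-- `ℤ₊ρ(E(G))`: the affine semigroup generated by the edge vectors. -/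
def SGraph.sgp (G : SGraph n) : AddSubmonoid (Fin n → ℤ) :=
  AddSubmonoid.closure G.rhoZSet

/-- adjacency via an edge of `G` (symmetric by definition). -/
def SGraph.adj (G : SGraph n) (i j : Fin n) : Prop :=
  ∃ e ∈ G.E, (e.1 = i ∧ e.2.1 = j) ∨ (e.1 = j ∧ e.2.1 = i)

/-- `G` is connected: any two vertices are joined by a walk. -/
def SGraph.Connected (G : SGraph n) : Prop :=
  ∀ i j : Fin n, Relation.ReflTransGen G.adj i j

/-- the vertex set of the connected component of `v`. -/
def SGraph.compSet (G : SGraph n) (v : Fin n) : Set (Fin n) :=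
  {w | Relation.ReflTransGen G.adj v w}

/-- `C` is (the vertex set of) a component of `G`. -/
def SGraph.IsComp (G : SGraph n) (C : Set (Fin n)) : Prop :=
  ∃ v, C = G.compSet v

/-- the edge `e` is incident to the vertex set `S`. -/
def incident (e : SEdge n) (S : Set (Fin n)) : Prop := e.1 ∈ S ∨ e.2.1 ∈ S

/-- the vertex set `C` is partitioned as `L ∪ R` and every edge of `G` incident to `C`
has one endpoint in `L` and one in `R`. -/
def SGraph.BipWith (G : SGraph n) (C L R : Set (Fin n)) : Prop :=
  C = L ∪ R ∧ Disjoint L R ∧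
    ∀ e ∈ G.E, incident e C → ((e.1 ∈ L ∧ e.2.1 ∈ R) ∨ (e.1 ∈ R ∧ e.2.1 ∈ L))

/-- the vertex set `C` (e.g. a component) is bipartite in `G`. -/
def SGraph.BipOn (G : SGraph n) (C : Set (Fin n)) : Prop := ∃ L R, G.BipWith C L R

/-- `L ∪ R` is a bipartition of (all of) `G`. -/
def SGraph.IsBipartition (G : SGraph n) (L R : Set (Fin n)) : Prop :=
  G.BipWith Set.univ L R

def SGraph.Bipartite (G : SGraph n) : Prop := ∃ L R, G.IsBipartition L R

/-- `comp G`: the number of connected components of `G`. -/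
noncomputable def SGraph.comp (G : SGraph n) : ℕ := Nat.card {C : Set (Fin n) // G.IsComp C}

/-- `bicomp G`: the number of bipartite connected components of `G`. -/
noncomputable def SGraph.bicomp (G : SGraph n) : ℕ :=
  Nat.card {C : Set (Fin n) // G.IsComp C ∧ G.BipOn C}

/-- the dual vector `e_L^* - e_R^*` as an element of `ℝ^n`. -/
noncomputable def dvec (L R : Set (Fin n)) : Fin n → ℝ :=
  fun v => Set.indicator L (fun _ => (1 : ℝ)) v - Set.indicator R (fun _ => (1 : ℝ)) v

/-- `L, R` witness the facet-subgraph condition for the bipartite component `C` of `H`: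
`C = L ∪ R` is a bipartition, and every edge of `G` not in `H` is a positive edge
incident to `L` but not `R`, or a negative edge incident to `R` but not `L`. -/
def FacetWitness (G H : SGraph n) (C L R : Set (Fin n)) : Prop :=
  H.BipWith C L R ∧
    ∀ e ∈ G.E \ H.E,
      (e.2.2 = 1 ∧ incident e L ∧ ¬ incident e R) ∨
      (e.2.2 = -1 ∧ incident e R ∧ ¬ incident e L)

/-- `H` is a facet subgraph of `G`. -/
def IsFacetSubgraph (G H : SGraph n) : Prop :=
  H.E ⊆ G.E ∧ H.bicomp = G.bicomp + 1 ∧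
    ∀ C, H.IsComp C → H.BipOn C → ¬ G.IsComp C → ∃ L R, FacetWitness G H C L R

/-- the cone generated by `S`: all nonnegative real combinations. -/
def coneOf (S : Set (Fin n → ℝ)) : Set (Fin n → ℝ) :=
  {x | ∃ (t : Finset (Fin n → ℝ)) (c : (Fin n → ℝ) → ℝ),
    ↑t ⊆ S ∧ (∀ y, 0 ≤ c y) ∧ x = ∑ y ∈ t, c y • y}

/-- the dimension of a subset of `ℝ^n`: dimension of its linear span. -/
noncomputable def sdim (S : Set (Fin n → ℝ)) : ℕ := Module.finrank ℝ (Submodule.span ℝ S)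

/-- `F` is a face of the cone `C`, cut out by a supporting linear form. -/
def IsFaceOf (C F : Set (Fin n → ℝ)) : Prop :=
  ∃ σ : (Fin n → ℝ) →ₗ[ℝ] ℝ, (∀ x ∈ C, 0 ≤ σ x) ∧ F = C ∩ {x | σ x = 0}

/-- `F` is a facet of the cone `C`: a proper face of dimension `dim C - 1`. -/
def IsFacetOf (C F : Set (Fin n → ℝ)) : Prop :=
  IsFaceOf C F ∧ F ≠ C ∧ sdim F + 1 = sdim C

/-- the subgraph of `G` consisting of the edges inside the vertex set `C`. -/
def SGraph.restrict (G : SGraph n) (C : Set (Fin n)) : SGraph n :=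
  ⟨{e ∈ G.E | e.1 ∈ C}, fun e he => G.sgn_unit e he.1⟩

/-- Vitulli's criterion for Serre's `R₁` condition for the edge ring `k[G]`
(taken here as the definition of `R₁`). -/
def SerreR1 (G : SGraph n) : Prop :=
  ∀ F, IsFacetOf (coneOf G.rhoRSet) F →
    ∃ σ : (Fin n → ℝ) →ₗ[ℝ] ℝ,
      (∀ x ∈ coneOf G.rhoRSet, 0 ≤ σ x) ∧
      F = coneOf G.rhoRSet ∩ {x | σ x = 0} ∧
      (∀ a ∈ G.lattice, ∃ z : ℤ, σ (toR a) = z) ∧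
      (∃ a ∈ G.sgp, σ (toR a) = 1) ∧
      ((AddSubgroup.closure {a : Fin n → ℤ | a ∈ G.sgp ∧ toR a ∈ F} : AddSubgroup (Fin n → ℤ)) :
          Set (Fin n → ℤ)) = {a : Fin n → ℤ | a ∈ G.lattice ∧ σ (toR a) = 0}

/-! ### Mixed signed, directed graphs -/

/-- A mixed signed, directed graph: signed edges `SE` (loops allowed) and
directed edges `DE` (no directed loops). -/
structure MGraph (n : ℕ) where
  SE : Set (SEdge n)
  DE : Set (Fin n × Fin n)
  sgn_unit : ∀ e ∈ SE, e.2.2 = 1 ∨ e.2.2 = -1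
  no_dloop : ∀ e ∈ DE, e.1 ≠ e.2

/-- `ρ((i,j)) = e_j - e_i` for a directed edge. -/
def rhoD (e : Fin n × Fin n) : Fin n → ℤ :=
  fun v => (if e.2 = v then 1 else 0) - (if e.1 = v then 1 else 0)

def MGraph.rhoZSet (G : MGraph n) : Set (Fin n → ℤ) :=
  {x | ∃ e ∈ G.SE, x = rhoZ e} ∪ {x | ∃ e ∈ G.DE, x = rhoD e}

def MGraph.rhoRSet (G : MGraph n) : Set (Fin n → ℝ) :=
  {x | ∃ a ∈ G.rhoZSet, x = toR a}

/-- `ℤρ(E(G))` for a mixed signed, directed graph. -/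
def MGraph.lattice (G : MGraph n) : AddSubgroup (Fin n → ℤ) :=
  AddSubgroup.closure G.rhoZSet

def MGraph.adj (G : MGraph n) (i j : Fin n) : Prop :=
  (∃ e ∈ G.SE, (e.1 = i ∧ e.2.1 = j) ∨ (e.1 = j ∧ e.2.1 = i)) ∨
  (∃ e ∈ G.DE, (e.1 = i ∧ e.2 = j) ∨ (e.1 = j ∧ e.2 = i))

def MGraph.Connected (G : MGraph n) : Prop :=
  ∀ i j : Fin n, Relation.ReflTransGen G.adj i j

def MGraph.compSet (G : MGraph n) (v : Fin n) : Set (Fin n) :=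
  {w | Relation.ReflTransGen G.adj v w}

def MGraph.IsComp (G : MGraph n) (C : Set (Fin n)) : Prop :=
  ∃ v, C = G.compSet v

noncomputable def MGraph.comp (G : MGraph n) : ℕ := Nat.card {C : Set (Fin n) // G.IsComp C}

/-- the directed edge `e` is incident to the vertex set `S`. -/
def dincident (e : Fin n × Fin n) (S : Set (Fin n)) : Prop := e.1 ∈ S ∨ e.2 ∈ S

/-- Bipartiteness of the augmented signed graph of `G` on the vertex set `C`,
expressed on `G` itself: `C = L ∪ R`, every signed edge incident to `C` crosses
between `L` and `R`, and every directed edge incident to `C` has both endpoints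
in the same part (its artificial vertex lies on the other side). -/
def MGraph.BipWith (G : MGraph n) (C L R : Set (Fin n)) : Prop :=
  C = L ∪ R ∧ Disjoint L R ∧
    (∀ e ∈ G.SE, incident e C → ((e.1 ∈ L ∧ e.2.1 ∈ R) ∨ (e.1 ∈ R ∧ e.2.1 ∈ L))) ∧
    (∀ e ∈ G.DE, dincident e C → ((e.1 ∈ L ∧ e.2 ∈ L) ∨ (e.1 ∈ R ∧ e.2 ∈ R)))

def MGraph.BipOn (G : MGraph n) (C : Set (Fin n)) : Prop := ∃ L R, G.BipWith C L R

def MGraph.IsBipartition (G : MGraph n) (L R : Set (Fin n)) : Prop :=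
  G.BipWith Set.univ L R

def MGraph.Bipartite (G : MGraph n) : Prop := ∃ L R, G.IsBipartition L R

/-- number of components of `G` whose augmentation is bipartite. -/
noncomputable def MGraph.bicomp (G : MGraph n) : ℕ :=
  Nat.card {C : Set (Fin n) // G.IsComp C ∧ G.BipOn C}

/-- facet-subgraph witness for mixed signed, directed graphs. -/
def MFacetWitness (G H : MGraph n) (C L R : Set (Fin n)) : Prop :=
  H.BipWith C L R ∧
    (∀ e ∈ G.SE \ H.SE,
      (e.2.2 = 1 ∧ incident e L ∧ ¬ incident e R) ∨
      (e.2.2 = -1 ∧ incident e R ∧ ¬ incident e L)) ∧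
    (∀ e ∈ G.DE \ H.DE, (e.2 ∈ L ∧ e.1 ∉ L) ∨ (e.1 ∈ R ∧ e.2 ∉ R))

/-- `H` is a facet subgraph of the mixed signed, directed graph `G`. -/
def IsMFacetSubgraph (G H : MGraph n) : Prop :=
  H.SE ⊆ G.SE ∧ H.DE ⊆ G.DE ∧ H.bicomp = G.bicomp + 1 ∧
    ∀ C, H.IsComp C → H.BipOn C → ¬ G.IsComp C → ∃ L R, MFacetWitness G H C L R

/-!
Modulo `ℤρ(E(H))`, a walk shows `e_w ≡ ±e_v` for all `w` in the component of `v`, so a vector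
supported on that component is congruent to `k • e_v` for some `k : ℤ`. On the bipartite
component the functional `Σ_L - Σ_R` kills every edge vector and is `±1` on `e_v`, so a balanced
vector has `k = 0`. On the non-bipartite component an odd cycle puts `2 • e_v` in the lattice,
and coordinate sums of lattice vectors are even, so a vector of even coordinate sum has `k` even.
As `H` has exactly the two components `C₁` and `C₂ = C₁ᶜ`, we split `a` into its restrictions to
them: the restriction to `C₁` is balanced, hence has even sum, and so has the one to `C₂`,
since `a` does.
-/

lemma rhoZ_eq_smul (e : SEdge n) :
    rhoZ e = e.2.2 • (Pi.single e.1 1 + Pi.single e.2.1 1) := by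
  funext v
  simp [rhoZ, Pi.single_apply, eq_comm]

noncomputable def balance (L R : Set (Fin n)) : (Fin n → ℤ) →+ ℤ where
  toFun x := ∑ i, L.indicator x i - ∑ i, R.indicator x i
  map_zero' := by simp
  map_add' x y := by
    simp only [Set.indicator_add', Pi.add_apply, Finset.sum_add_distrib]
    ring

lemma sum_indicator_single (S : Set (Fin n)) (v : Fin n) :
    ∑ i, S.indicator (Pi.single v (1 : ℤ)) i = S.indicator 1 v := by
  rw [Finset.sum_eq_single v (fun i _ hi => by simp [hi]) (by simp)]
  by_cases hv : v ∈ S <;> simp [hv]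

lemma balance_single (L R : Set (Fin n)) (v : Fin n) :
    balance L R (Pi.single v 1) = L.indicator 1 v - R.indicator 1 v :=
  congr_arg₂ (· - ·) (sum_indicator_single L v) (sum_indicator_single R v)

lemma balance_indicator {C L R : Set (Fin n)} (hC : C = L ∪ R) (x : Fin n → ℤ) :
    balance L R (C.indicator x) = balance L R x := by
  subst hC
  simp [balance, Set.indicator_indicator, Set.inter_eq_left.mpr Set.subset_union_left,
    Set.inter_eq_left.mpr Set.subset_union_right]

lemma even_sum_indicator_union {L R : Set (Fin n)} (hLR : Disjoint L R) {x : Fin n → ℤ}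
    (hbal : balance L R x = 0) : Even (∑ i, (L ∪ R).indicator x i) := by
  rw [Set.indicator_union_of_disjoint hLR, Finset.sum_add_distrib, sub_eq_zero.mp hbal]
  exact ⟨_, rfl⟩

lemma even_sum_indicator_compl {C : Set (Fin n)} {x : Fin n → ℤ} (hx : Even (∑ i, x i))
    (hC : Even (∑ i, C.indicator x i)) : Even (∑ i, Cᶜ.indicator x i) := by
  rw [← Set.indicator_self_add_compl C x] at hx
  simp only [Pi.add_apply, Finset.sum_add_distrib] at hx
  exact (Int.even_add.mp hx).mp hC

namespace SGraph

variable (G : SGraph n)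

lemma single_add_single_mem_lattice {e : SEdge n} (he : e ∈ G.E) :
    Pi.single e.1 1 + Pi.single e.2.1 1 ∈ G.lattice := by
  have hρ : rhoZ e ∈ G.lattice := AddSubgroup.subset_closure ⟨e, he, rfl⟩
  rcases G.sgn_unit e he with hs | hs
  · simpa [rhoZ_eq_smul, hs] using hρ
  · convert G.lattice.neg_mem hρ using 1
    rw [rhoZ_eq_smul, hs, neg_one_smul, neg_neg]

lemma adj_symm {i j : Fin n} (h : G.adj i j) : G.adj j i := by
  obtain ⟨e, he, h⟩ := h
  exact ⟨e, he, h.symm⟩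

lemma single_add_mem_lattice_of_adj {i j : Fin n} (h : G.adj i j) :
    Pi.single i 1 + Pi.single j 1 ∈ G.lattice := by
  obtain ⟨e, he, ⟨rfl, rfl⟩ | ⟨rfl, rfl⟩⟩ := h
  · exact G.single_add_single_mem_lattice he
  · rw [add_comm]
    exact G.single_add_single_mem_lattice he

lemma reachable_symm {i j : Fin n} (h : Relation.ReflTransGen G.adj i j) :
    Relation.ReflTransGen G.adj j i := by
  induction h with
  | refl => rfl
  | tail _ hjk ih => exact Relation.ReflTransGen.head (G.adj_symm hjk) ih

lemma single_sub_or_add_mem_lattice {i j : Fin n} (h : Relation.ReflTransGen G.adj i j) :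
    Pi.single i 1 - Pi.single j 1 ∈ G.lattice ∨ Pi.single i 1 + Pi.single j 1 ∈ G.lattice := by
  induction h with
  | refl => exact Or.inl (by simp)
  | @tail j k _ hjk ih =>
    have hedge := G.single_add_mem_lattice_of_adj hjk
    rcases ih with hsub | hadd
    · right
      convert G.lattice.add_mem hsub hedge using 1
      abel
    · left
      convert G.lattice.sub_mem hadd hedge using 1
      abel

lemma single_mem_sup_zmultiples {v w : Fin n} (hw : w ∈ G.compSet v) :
    Pi.single w 1 ∈ G.lattice ⊔ AddSubgroup.zmultiples (Pi.single v 1) := by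
  have hv : Pi.single v 1 ∈ G.lattice ⊔ AddSubgroup.zmultiples (Pi.single v 1) :=
    AddSubgroup.mem_sup_right (AddSubgroup.mem_zmultiples _)
  rcases G.single_sub_or_add_mem_lattice (G.reachable_symm hw) with hsub | hadd
  · simpa using add_mem (AddSubgroup.mem_sup_left hsub) hv
  · simpa using sub_mem (AddSubgroup.mem_sup_left hadd) hv

lemma exists_sub_zsmul_single_mem_lattice {v : Fin n} {x : Fin n → ℤ}
    (hx : Function.support x ⊆ G.compSet v) :
    ∃ k : ℤ, x - k • Pi.single v 1 ∈ G.lattice := by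
  have hmem : x ∈ G.lattice ⊔ AddSubgroup.zmultiples (Pi.single v 1) := by
    rw [← Finset.univ_sum_single x]
    refine sum_mem fun w _ => ?_
    by_cases hw : w ∈ G.compSet v
    · simpa [← Pi.single_smul] using
        AddSubgroup.zsmul_mem _ (G.single_mem_sup_zmultiples hw) (x w)
    · simp [Function.notMem_support.mp (mt (@hx w) hw)]
  obtain ⟨y, hy, z, ⟨k, rfl⟩, hyz⟩ := AddSubgroup.mem_sup.mp hmem
  exact ⟨k, by simpa [← hyz] using hy⟩

lemma even_sum_of_mem_lattice {x : Fin n → ℤ} (hx : x ∈ G.lattice) : Even (∑ i, x i) := by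
  induction hx using AddSubgroup.closure_induction with
  | mem _ hy =>
    obtain ⟨e, -, rfl⟩ := hy
    simp [rhoZ_eq_smul, Finset.sum_add_distrib, ← Finset.mul_sum]
  | zero => simp
  | add _ _ _ _ hy hz => simpa [Finset.sum_add_distrib] using hy.add hz
  | neg _ _ hy => simpa using hy.neg

/-- Otherwise the vertices `w` with `e_v - e_w`, resp. `e_v + e_w`, in the lattice would
bipartition the component. -/
lemma two_smul_single_mem_lattice {v : Fin n} (hnb : ¬ G.BipOn (G.compSet v)) :
    (2 : ℤ) • Pi.single v 1 ∈ G.lattice := by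
  by_contra h2
  apply hnb
  refine ⟨{w | w ∈ G.compSet v ∧ Pi.single v 1 - Pi.single w 1 ∈ G.lattice},
    {w | w ∈ G.compSet v ∧ Pi.single v 1 + Pi.single w 1 ∈ G.lattice}, ?_, ?_, ?_⟩
  · ext w
    refine ⟨fun hw => ?_, by rintro (⟨hw, -⟩ | ⟨hw, -⟩) <;> exact hw⟩
    rcases G.single_sub_or_add_mem_lattice hw with h | h
    exacts [Or.inl ⟨hw, h⟩, Or.inr ⟨hw, h⟩]
  · refine Set.disjoint_left.mpr fun w ⟨_, hsub⟩ ⟨_, hadd⟩ => h2 ?_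
    simpa [two_smul] using G.lattice.add_mem hsub hadd
  · intro e he hinc
    have hadj : G.adj e.1 e.2.1 := ⟨e, he, Or.inl ⟨rfl, rfl⟩⟩
    have h1 : e.1 ∈ G.compSet v := hinc.elim id fun h => h.tail (G.adj_symm hadj)
    have h2 : e.2.1 ∈ G.compSet v := Relation.ReflTransGen.tail h1 hadj
    have hedge := G.single_add_single_mem_lattice he
    rcases G.single_sub_or_add_mem_lattice h1 with h | h
    · refine Or.inl ⟨⟨h1, h⟩, h2, ?_⟩
      convert G.lattice.add_mem h hedge using 1
      abel
    · refine Or.inr ⟨⟨h1, h⟩, h2, ?_⟩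
      convert G.lattice.sub_mem h hedge using 1
      abel

lemma mem_lattice_of_not_bipOn {v : Fin n} (hnb : ¬ G.BipOn (G.compSet v)) {x : Fin n → ℤ}
    (hx : Function.support x ⊆ G.compSet v) (heven : Even (∑ i, x i)) :
    x ∈ G.lattice := by
  obtain ⟨k, hk⟩ := G.exists_sub_zsmul_single_mem_lattice hx
  have hkeven : Even k := by
    have hsum : ∑ i, (x - k • Pi.single v 1 : Fin n → ℤ) i = ∑ i, x i - k := by
      simp [Finset.sum_sub_distrib, ← Finset.mul_sum]
    have := G.even_sum_of_mem_lattice hk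
    rw [hsum] at this
    exact (Int.even_sub.mp this).mp heven
  obtain ⟨m, rfl⟩ := hkeven
  have := G.lattice.zsmul_mem (G.two_smul_single_mem_lattice hnb) m
  simpa [← two_mul, mul_comm, mul_smul] using G.lattice.add_mem hk this

lemma mem_compSet_self (v : Fin n) : v ∈ G.compSet v := Relation.ReflTransGen.refl

lemma compSet_eq_of_mem {v w : Fin n} (hw : w ∈ G.compSet v) : G.compSet w = G.compSet v :=
  Set.ext fun _ => ⟨hw.trans, (G.reachable_symm hw).trans⟩

lemma eq_compl_of_isComp {C D : Set (Fin n)} (hC : G.IsComp C) (hD : G.IsComp D) (hCD : C ≠ D)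
    (hcover : ∀ E, G.IsComp E → E = C ∨ E = D) : D = Cᶜ := by
  obtain ⟨u, rfl⟩ := hC
  obtain ⟨u', rfl⟩ := hD
  ext w
  refine ⟨fun hw hw' => hCD ?_, fun hw => ?_⟩
  · rw [← G.compSet_eq_of_mem hw, G.compSet_eq_of_mem hw']
  · rcases hcover _ ⟨w, rfl⟩ with h | h
    · exact absurd (h ▸ G.mem_compSet_self w) hw
    · exact h ▸ G.mem_compSet_self w

lemma lattice_eq_sup_restrict (C : Set (Fin n)) :
    G.lattice = (G.restrict C).lattice ⊔ (G.restrict Cᶜ).lattice := by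
  rw [lattice, lattice, lattice, ← AddSubgroup.closure_union]
  congr 1
  ext x
  constructor
  · rintro ⟨e, he, rfl⟩
    by_cases hC : e.1 ∈ C
    exacts [Or.inl ⟨e, ⟨he, hC⟩, rfl⟩, Or.inr ⟨e, ⟨he, hC⟩, rfl⟩]
  · rintro (⟨e, ⟨he, -⟩, rfl⟩ | ⟨e, ⟨he, -⟩, rfl⟩) <;> exact ⟨e, he, rfl⟩

lemma balance_eq_zero_of_mem_lattice {C L R : Set (Fin n)} (hLR : G.BipWith C L R)
    {x : Fin n → ℤ} (hx : x ∈ G.lattice) : balance L R x = 0 := by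
  suffices G.lattice ≤ (balance L R).ker from this hx
  refine (AddSubgroup.closure_le _).mpr ?_
  rintro _ ⟨e, he, rfl⟩
  obtain ⟨rfl, hdisj, hcross⟩ := hLR
  rw [SetLike.mem_coe, AddMonoidHom.mem_ker, rhoZ_eq_smul, map_zsmul, map_add, balance_single,
    balance_single]
  by_cases hinc : incident e (L ∪ R)
  · rcases hcross e he hinc with ⟨h1, h2⟩ | ⟨h1, h2⟩
    · simp [h1, h2, Set.disjoint_left.mp hdisj h1, Set.disjoint_right.mp hdisj h2]
    · simp [h1, h2, Set.disjoint_right.mp hdisj h1, Set.disjoint_left.mp hdisj h2]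
  · simp only [incident, Set.mem_union, not_or] at hinc
    simp [hinc]

lemma mem_lattice_of_bipWith {v : Fin n} {L R : Set (Fin n)} (hLR : G.BipWith (G.compSet v) L R)
    {x : Fin n → ℤ} (hx : Function.support x ⊆ G.compSet v) (hbal : balance L R x = 0) :
    x ∈ G.lattice := by
  obtain ⟨k, hk⟩ := G.exists_sub_zsmul_single_mem_lattice hx
  have hkbal : k * balance L R (Pi.single v 1) = 0 := by
    have := G.balance_eq_zero_of_mem_lattice hLR hk
    rwa [map_sub, map_zsmul, hbal, zero_sub, neg_eq_zero, smul_eq_mul] at this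
  have hv : v ∈ L ∪ R := hLR.1 ▸ G.mem_compSet_self v
  have hk0 : k = 0 := by
    rcases hv with hv | hv
    · simpa [balance_single, hv, Set.disjoint_left.mp hLR.2.1 hv] using hkbal
    · simpa [balance_single, hv, Set.disjoint_right.mp hLR.2.1 hv] using hkbal
  simpa [hk0] using hk

end SGraph

theorem stmt14_general {n : ℕ} (G H : SGraph n)
    (C1 C2 L1 R1 : Set (Fin n)) (h1 : H.IsComp C1) (h2 : H.IsComp C2)
    (honly : ∀ C, H.IsComp C → C = C1 ∨ C = C2)
    (hw : FacetWitness G H C1 L1 R1) (hb2 : ¬ H.BipOn C2)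
    (a : Fin n → ℤ) (ha : a ∈ G.lattice)
    (hsum : ∑ i, L1.indicator a i = ∑ i, R1.indicator a i) :
    a ∈ H.lattice ∧
      H.lattice = (H.restrict C1).lattice ⊔ (H.restrict C2).lattice := by
  have hbip : H.BipWith C1 L1 R1 := hw.1
  obtain rfl : C2 = C1ᶜ :=
    H.eq_compl_of_isComp h1 h2 (fun h => hb2 (h ▸ ⟨L1, R1, hbip⟩)) honly
  refine ⟨?_, H.lattice_eq_sup_restrict C1⟩
  have hbal : balance L1 R1 a = 0 := sub_eq_zero.mpr hsum
  have hevenC1 : Even (∑ i, C1.indicator a i) := hbip.1 ▸ even_sum_indicator_union hbip.2.1 hbal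
  have hevenC2 := even_sum_indicator_compl (G.even_sum_of_mem_lattice ha) hevenC1
  rw [← Set.indicator_self_add_compl C1 a]
  obtain ⟨v1, rfl⟩ := h1
  obtain ⟨v2, hv2⟩ := h2
  refine add_mem ?_ ?_
  · refine H.mem_lattice_of_bipWith hbip Set.support_indicator_subset ?_
    rwa [balance_indicator hbip.1]
  · rw [hv2] at hb2 hevenC2 ⊢
    exact H.mem_lattice_of_not_bipOn hb2 Set.support_indicator_subset hevenC2

/-- for a connected non-bipartite `G` and a facet subgraph `H` with
exactly two components, `C₁` bipartite (with witnessing bipartition `L₁ ∪ R₁`) and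
`C₂` non-bipartite, any `a ∈ ℤρ(E(G))` balancing `L₁` against `R₁` lies in
`ℤρ(E(H)) = ℤρ(E(H₁)) ⊕ ℤρ(E(H₂))`. -/
theorem stmt14 {n : ℕ} (G H : SGraph n) (hconn : G.Connected) (hnb : ¬ G.Bipartite)
    (hfs : IsFacetSubgraph G H)
    (C1 C2 L1 R1 : Set (Fin n)) (h1 : H.IsComp C1) (h2 : H.IsComp C2) (hne : C1 ≠ C2)
    (honly : ∀ C, H.IsComp C → C = C1 ∨ C = C2)
    (hw : FacetWitness G H C1 L1 R1) (hb2 : ¬ H.BipOn C2)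
    (a : Fin n → ℤ) (ha : a ∈ G.lattice)
    (hsum : ∑ i, L1.indicator a i = ∑ i, R1.indicator a i) :
    a ∈ H.lattice ∧
      H.lattice = (H.restrict C1).lattice ⊔ (H.restrict C2).lattice :=
  stmt14_general G H C1 C2 L1 R1 h1 h2 honly hw hb2 a ha hsum

end EdgeRing
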